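/- Fix x ∈ (0,π]. If Δ : [0,x] → Matrix N N ℝ is continuous and satisfies the homogeneous integral equation Δ(y) + ∫₀ˣ Δ(t)·F(t,y) dt = 0 for all y ∈ [0,x], then Δ is identically zero on [0,x]. -/

import Mathlib

open Matrix MeasureTheory Set Filter

attribute [local instance] Matrix.normedAddCommGroup Matrix.normedSpace

/-!
Write `δ` for a row of `Δ`, `aₙ = ∫₀ˣ δ·φₙ` and `νₙ = ‖φₙ‖²`. Inserting the expansion of `F`, the
equation says `δ = -∑ cₙ aₙ φₙ` uniformly on `[0, x]`; pairing with `δ` gives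
`∫₀ˣ |δ|² = -∑ cₙ aₙ²`, while Bessel's inequality for the orthogonal family `(φₙ)` (with `δ`
extended by zero to `[0, π]`) gives `∑ aₙ² / νₙ ≤ ∫₀ˣ |δ|²`. Hence
`∑ aₙ² (1 + cₙ νₙ) / νₙ ≤ 0`, a series of nonnegative terms, so every `aₙ` vanishes, and then so
does `δ = -∑ cₙ aₙ φₙ`.
-/

open Topology

section UniformLimits

variable {ι X E F G : Type*} [NormedAddCommGroup E] [NormedSpace ℝ E]
  [NormedAddCommGroup F] [NormedSpace ℝ F] [NormedAddCommGroup G] [NormedSpace ℝ G]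
  {l : Filter ι}

theorem TendstoUniformlyOn.bilinear_of_bounded_left {s : Set X} {K : ι → X → F} {k : X → F}
    (hK : TendstoUniformlyOn K k l s) (B : E →L[ℝ] F →L[ℝ] G) {h : X → E} {C : ℝ}
    (hh : ∀ p ∈ s, ‖h p‖ ≤ C) :
    TendstoUniformlyOn (fun i p => B (h p) (K i p)) (fun p => B (h p) (k p)) l s := by
  rw [Metric.tendstoUniformlyOn_iff] at hK ⊢
  intro ε hε
  set M := ‖B‖ * max C 0
  have hM : 0 ≤ M := by positivity
  filter_upwards [hK (ε / (M + 1)) (by positivity)] with i hi p hp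
  rw [dist_eq_norm, ← map_sub]
  calc ‖B (h p) (k p - K i p)‖ ≤ ‖B‖ * ‖h p‖ * ‖k p - K i p‖ := B.le_opNorm₂ _ _
    _ ≤ M * (ε / (M + 1)) := by
        rw [← dist_eq_norm]
        exact mul_le_mul (mul_le_mul_of_nonneg_left (le_max_of_le_left (hh p hp)) (norm_nonneg B))
          (hi p hp).le dist_nonneg hM
    _ < ε := by
        rw [mul_div_assoc', div_lt_iff₀ (by positivity)]
        nlinarith

theorem TendstoUniformlyOn.parametric_intervalIntegral {Y : Type*} {K : ι → ℝ → Y → E}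
    {k : ℝ → Y → E} {a b : ℝ} {s : Set Y}
    (hK : TendstoUniformlyOn (fun i p => K i p.1 p.2) (fun p => k p.1 p.2) l (uIcc a b ×ˢ s))
    (hKi : ∀ i, ∀ y ∈ s, IntervalIntegrable (K i · y) volume a b)
    (hki : ∀ y ∈ s, IntervalIntegrable (k · y) volume a b) :
    TendstoUniformlyOn (fun i y => ∫ t in a..b, K i t y) (fun y => ∫ t in a..b, k t y) l s := by
  rw [Metric.tendstoUniformlyOn_iff] at hK ⊢
  intro ε hε
  filter_upwards [hK (ε / (|b - a| + 1)) (by positivity)] with i hi y hy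
  rw [dist_eq_norm, ← intervalIntegral.integral_sub (hki y hy) (hKi i y hy)]
  calc ‖∫ t in a..b, k t y - K i t y‖ ≤ ε / (|b - a| + 1) * |b - a| := by
        refine intervalIntegral.norm_integral_le_of_norm_le_const fun t ht => ?_
        rw [← dist_eq_norm]
        exact (hi (t, y) ⟨uIoc_subset_uIcc ht, hy⟩).le
    _ < ε := by
        rw [div_mul_eq_mul_div, div_lt_iff₀ (by positivity)]
        nlinarith [abs_nonneg (b - a)]

end UniformLimits

theorem intervalIntegral.eval_integral {ι : Type*} [Fintype ι] {E : ι → Type*}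
    [∀ i, NormedAddCommGroup (E i)] [∀ i, NormedSpace ℝ (E i)] [∀ i, CompleteSpace (E i)]
    {f : ℝ → ∀ i, E i} {a b : ℝ} (hf : IntervalIntegrable f volume a b) (i : ι) :
    (∫ t in a..b, f t) i = ∫ t in a..b, f t i :=
  ((ContinuousLinearMap.proj (R := ℝ) (φ := E) i).intervalIntegral_comp_comm hf).symm

theorem add_eq_zero_of_sum_le_of_hasSum_neg {β : Type*} {u v : β → ℝ} {A : ℝ}
    (hle : ∀ s : Finset β, ∑ n ∈ s, u n ≤ A) (hv : HasSum v (-A)) (huv : ∀ n, 0 ≤ u n + v n)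
    (n : β) : u n + v n = 0 := by
  refine le_antisymm ?_ (huv n)
  have hlim : Tendsto (fun s => A + ∑ k ∈ s, v k) atTop (𝓝 0) := by
    simpa using hv.const_add A
  refine ge_of_tendsto hlim ?_
  filter_upwards [eventually_ge_atTop {n}] with s hs
  calc u n + v n ≤ ∑ k ∈ s, (u k + v k) :=
        Finset.single_le_sum (fun k _ => huv k) (Finset.singleton_subset_iff.1 hs)
    _ ≤ A + ∑ k ∈ s, v k := by
        rw [Finset.sum_add_distrib]
        exact add_le_add_left (hle s) _

section ContinuousOn

variable {X m n : Type*} [TopologicalSpace X] [Fintype m] {s : Set X}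

theorem ContinuousOn.dotProduct {f g : X → m → ℝ} (hf : ContinuousOn f s)
    (hg : ContinuousOn g s) : ContinuousOn (fun t => f t ⬝ᵥ g t) s :=
  (continuous_fst.dotProduct continuous_snd).comp_continuousOn (hf.prodMk hg)

theorem ContinuousOn.matrix_vecMul {f : X → m → ℝ} {g : X → Matrix m n ℝ}
    (hf : ContinuousOn f s) (hg : ContinuousOn g s) : ContinuousOn (fun t => f t ᵥ* g t) s :=
  (continuous_fst.matrix_vecMul continuous_snd).comp_continuousOn (hf.prodMk hg)

end ContinuousOn

namespace Matrix

variable {m n : Type*} [Fintype m] [Fintype n]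

theorem dotProduct_self_nonneg (v : m → ℝ) : 0 ≤ v ⬝ᵥ v :=
  Finset.sum_nonneg fun _ _ => mul_self_nonneg _

noncomputable def dotProductL : (m → ℝ) →L[ℝ] (m → ℝ) →L[ℝ] ℝ :=
  (dotProductBilin ℝ ℝ).toContinuousBilinearMap

noncomputable def vecMulL : (m → ℝ) →L[ℝ] Matrix m n ℝ →L[ℝ] (n → ℝ) :=
  IsBilinearMap.toContinuousBilinearMap
    { add_left := fun _ _ _ => add_vecMul _ _ _
      smul_left := fun _ _ _ => smul_vecMul _ _ _
      add_right := fun _ _ _ => vecMul_add _ _ _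
      smul_right := fun _ _ _ => vecMul_smul _ _ _ }

end Matrix

section Kernel

variable {m : Type*} {φ : ℕ → ℝ → m → ℝ} {c : ℕ → ℝ} {F : ℝ → ℝ → Matrix m m ℝ}

noncomputable def kernelPartialSum (φ : ℕ → ℝ → m → ℝ) (c : ℕ → ℝ) (s : Finset ℕ) (t y : ℝ) :
    Matrix m m ℝ :=
  ∑ n ∈ s, c n • vecMulVec (φ n t) (φ n y)

theorem continuous_kernelPartialSum (hφ : ∀ n, Continuous (φ n)) (s : Finset ℕ) :
    Continuous fun p : ℝ × ℝ => kernelPartialSum φ c s p.1 p.2 :=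
  continuous_finsetSum _ fun n _ =>
    (((hφ n).comp continuous_fst).matrix_vecMulVec ((hφ n).comp continuous_snd)).const_smul (c n)

theorem continuousOn_of_tendstoUniformlyOn_kernelPartialSum (hφ : ∀ n, Continuous (φ n))
    {S : Set (ℝ × ℝ)}
    (hF : TendstoUniformlyOn (fun s p => kernelPartialSum φ c s p.1 p.2) (fun p => F p.1 p.2)
      atTop S) :
    ContinuousOn (Function.uncurry F) S :=
  hF.continuousOn (Frequently.of_forall fun s => (continuous_kernelPartialSum hφ s).continuousOn)

end Kernel

variable {m : Type*} [Fintype m] {φ : ℕ → ℝ → m → ℝ} {c : ℕ → ℝ} {F : ℝ → ℝ → Matrix m m ℝ}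
  {δ : ℝ → m → ℝ} {a b x : ℝ}

theorem integral_dotProduct_sum_smul {f : ℝ → m → ℝ} (hφ : ∀ n, Continuous (φ n)) (hax : a ≤ x)
    (hf : ContinuousOn f (Icc a x)) (w : ℕ → ℝ) (s : Finset ℕ) :
    ∫ t in a..x, f t ⬝ᵥ ∑ n ∈ s, w n • φ n t = ∑ n ∈ s, w n * ∫ t in a..x, f t ⬝ᵥ φ n t := by
  simp only [dotProduct_sum, dotProduct_smul, smul_eq_mul]
  rw [intervalIntegral.integral_finsetSum (f := fun n t => w n * (f t ⬝ᵥ φ n t)) fun n _ =>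
    (continuousOn_const.mul (hf.dotProduct (hφ n).continuousOn)).intervalIntegrable_of_Icc hax]
  simp only [intervalIntegral.integral_const_mul]

theorem integral_sum_smul_dotProduct_self (hφ : ∀ n, Continuous (φ n))
    (horth : ∀ i j, i ≠ j → ∫ t in a..b, φ i t ⬝ᵥ φ j t = 0) (hab : a ≤ b) (w : ℕ → ℝ)
    (s : Finset ℕ) :
    ∫ t in a..b, (∑ n ∈ s, w n • φ n t) ⬝ᵥ ∑ n ∈ s, w n • φ n t
      = ∑ n ∈ s, w n ^ 2 * ∫ t in a..b, φ n t ⬝ᵥ φ n t := by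
  have hp : ContinuousOn (fun t => ∑ n ∈ s, w n • φ n t) (Icc a b) :=
    continuousOn_finsetSum _ fun n _ => (hφ n).continuousOn.const_smul (w n)
  rw [integral_dotProduct_sum_smul hφ hab hp]
  refine Finset.sum_congr rfl fun n hn => ?_
  simp only [dotProduct_comm _ (φ n _)]
  rw [integral_dotProduct_sum_smul hφ hab (hφ n).continuousOn,
    Finset.sum_eq_single_of_mem n hn fun k _ hkn => by rw [horth n k hkn.symm, mul_zero]]
  ring

theorem sum_sq_integral_dotProduct_div_le (hφ : ∀ n, Continuous (φ n))
    (horth : ∀ i j, i ≠ j → ∫ t in a..b, φ i t ⬝ᵥ φ j t = 0) (hax : a ≤ x) (hxb : x ≤ b)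
    {f : ℝ → m → ℝ} (hf : ContinuousOn f (Icc a x)) (s : Finset ℕ) :
    ∑ n ∈ s, (∫ t in a..x, f t ⬝ᵥ φ n t) ^ 2 / ∫ t in a..b, φ n t ⬝ᵥ φ n t
      ≤ ∫ t in a..x, f t ⬝ᵥ f t := by
  -- `p` projects `f` (extended by zero beyond `x`) onto the span of the `φ n`; expand `‖f - p‖²`.
  set coeff := fun n => ∫ t in a..x, f t ⬝ᵥ φ n t
  set ν := fun n => ∫ t in a..b, φ n t ⬝ᵥ φ n t
  set p := fun t => ∑ n ∈ s, (coeff n / ν n) • φ n t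
  change ∑ n ∈ s, coeff n ^ 2 / ν n ≤ _
  have hp : Continuous p := continuous_finsetSum _ fun n _ => (hφ n).const_smul (coeff n / ν n)
  have hfp : ∫ t in a..x, f t ⬝ᵥ p t = ∑ n ∈ s, coeff n ^ 2 / ν n := by
    rw [integral_dotProduct_sum_smul hφ hax hf]
    exact Finset.sum_congr rfl fun n _ => by ring
  have hpp : ∫ t in a..b, p t ⬝ᵥ p t = ∑ n ∈ s, coeff n ^ 2 / ν n := by
    rw [integral_sum_smul_dotProduct_self hφ horth (hax.trans hxb)]
    refine Finset.sum_congr rfl fun n _ => ?_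
    rcases eq_or_ne (ν n) 0 with h | h
    · simp [h]
    · field_simp
      rfl
  have hsplit : (∫ t in a..x, p t ⬝ᵥ p t) + ∫ t in x..b, p t ⬝ᵥ p t = ∫ t in a..b, p t ⬝ᵥ p t :=
    intervalIntegral.integral_add_adjacent_intervals
      ((hp.dotProduct hp).intervalIntegrable a x) ((hp.dotProduct hp).intervalIntegrable x b)
  have hexpand : ∫ t in a..x, (f t - p t) ⬝ᵥ (f t - p t)
      = (∫ t in a..x, f t ⬝ᵥ f t) - 2 * (∫ t in a..x, f t ⬝ᵥ p t) + ∫ t in a..x, p t ⬝ᵥ p t := by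
    have hI : ∀ {g h : ℝ → m → ℝ}, ContinuousOn g (Icc a x) → ContinuousOn h (Icc a x) →
        IntervalIntegrable (fun t => g t ⬝ᵥ h t) volume a x :=
      fun hg hh => (hg.dotProduct hh).intervalIntegrable_of_Icc hax
    have hp' := hp.continuousOn (s := Icc a x)
    rw [← intervalIntegral.integral_const_mul,
      ← intervalIntegral.integral_sub (hI hf hf) ((hI hf hp').const_mul 2),
      ← intervalIntegral.integral_add ((hI hf hf).sub ((hI hf hp').const_mul 2)) (hI hp' hp')]
    refine intervalIntegral.integral_congr fun t _ => ?_
    simp only [sub_dotProduct, dotProduct_sub, dotProduct_comm (p t) (f t)]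
    ring
  have hnonneg : 0 ≤ (∫ t in a..x, (f t - p t) ⬝ᵥ (f t - p t)) + ∫ t in x..b, p t ⬝ᵥ p t :=
    add_nonneg (intervalIntegral.integral_nonneg hax fun t _ => dotProduct_self_nonneg _)
      (intervalIntegral.integral_nonneg hxb fun t _ => dotProduct_self_nonneg _)
  linarith

theorem integral_vecMul_kernelPartialSum (hφ : ∀ n, Continuous (φ n)) (hax : a ≤ x)
    (hδ : ContinuousOn δ (Icc a x)) (s : Finset ℕ) (y : ℝ) :
    ∫ t in a..x, δ t ᵥ* kernelPartialSum φ c s t y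
      = ∑ n ∈ s, (c n * ∫ t in a..x, δ t ⬝ᵥ φ n t) • φ n y := by
  simp only [kernelPartialSum, vecMul_sum, vecMul_smul, vecMul_vecMulVec]
  rw [intervalIntegral.integral_finsetSum (f := fun n t => c n • (δ t ⬝ᵥ φ n t) • φ n y)
    fun n _ => (((hδ.dotProduct (hφ n).continuousOn).smul continuousOn_const).const_smul
      (c n)).intervalIntegrable_of_Icc hax]
  refine Finset.sum_congr rfl fun n _ => ?_
  rw [intervalIntegral.integral_smul, intervalIntegral.integral_smul_const, smul_smul]

theorem tendstoUniformlyOn_sum_coeff_smul_neg (hφ : ∀ n, Continuous (φ n)) (hax : a ≤ x)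
    (hδ : ContinuousOn δ (Icc a x))
    (hF : TendstoUniformlyOn (fun s p => kernelPartialSum φ c s p.1 p.2) (fun p => F p.1 p.2)
      atTop (Icc a x ×ˢ Icc a x))
    (heq : ∀ y ∈ Icc a x, δ y + ∫ t in a..x, δ t ᵥ* F t y = 0) :
    TendstoUniformlyOn (fun s y => ∑ n ∈ s, (c n * ∫ t in a..x, δ t ⬝ᵥ φ n t) • φ n y)
      (fun y => -δ y) atTop (Icc a x) := by
  obtain ⟨C, hC⟩ := isCompact_Icc.exists_bound_of_continuousOn hδ
  have hFc := continuousOn_of_tendstoUniformlyOn_kernelPartialSum hφ hF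
  have hK : TendstoUniformlyOn (fun s p => δ p.1 ᵥ* kernelPartialSum φ c s p.1 p.2)
      (fun p => δ p.1 ᵥ* F p.1 p.2) atTop (uIcc a x ×ˢ Icc a x) := by
    rw [uIcc_of_le hax]
    exact hF.bilinear_of_bounded_left vecMulL (h := fun p => δ p.1) fun p hp => hC p.1 hp.1
  refine (TendstoUniformlyOn.parametric_intervalIntegral
    (K := fun s t y => δ t ᵥ* kernelPartialSum φ c s t y) (k := fun t y => δ t ᵥ* F t y) hK
    (fun s y _ => ?_) fun y hy => ?_).congr_right ?_ |>.congr (Eventually.of_forall fun s y _ => ?_)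
  · exact (hδ.matrix_vecMul ((continuous_kernelPartialSum hφ s).comp
      (continuous_id.prodMk continuous_const)).continuousOn).intervalIntegrable_of_Icc hax
  · exact (hδ.matrix_vecMul (hFc.uncurry_right y hy)).intervalIntegrable_of_Icc hax
  · exact fun y hy => eq_neg_of_add_eq_zero_right (heq y hy)
  · exact integral_vecMul_kernelPartialSum hφ hax hδ s y

theorem hasSum_mul_coeff_sq (hφ : ∀ n, Continuous (φ n)) (hax : a ≤ x)
    (hδ : ContinuousOn δ (Icc a x))
    (hF : TendstoUniformlyOn (fun s p => kernelPartialSum φ c s p.1 p.2) (fun p => F p.1 p.2)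
      atTop (Icc a x ×ˢ Icc a x))
    (heq : ∀ y ∈ Icc a x, δ y + ∫ t in a..x, δ t ᵥ* F t y = 0) :
    HasSum (fun n => c n * (∫ t in a..x, δ t ⬝ᵥ φ n t) ^ 2) (-∫ t in a..x, δ t ⬝ᵥ δ t) := by
  obtain ⟨C, hC⟩ := isCompact_Icc.exists_bound_of_continuousOn hδ
  have hdot := (tendstoUniformlyOn_sum_coeff_smul_neg hφ hax hδ hF heq).bilinear_of_bounded_left
    dotProductL hC
  rw [← uIcc_of_le hax] at hdot
  have hlim := hdot.tendsto_intervalIntegral_of_continuousOn (μ := volume)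
    (Eventually.of_forall fun s => ?_)
  · simp only [dotProductL, LinearMap.toContinuousBilinearMap_apply, dotProductBilin_apply_apply,
      dotProduct_neg, intervalIntegral.integral_neg,
      integral_dotProduct_sum_smul hφ hax hδ] at hlim
    exact hlim.congr fun s => Finset.sum_congr rfl fun n _ => by ring
  · rw [uIcc_of_le hax]
    exact hδ.dotProduct (continuousOn_finsetSum _ fun n _ => (hφ n).continuousOn.const_smul
      (c n * ∫ t in a..x, δ t ⬝ᵥ φ n t))

theorem eq_zero_of_add_integral_vecMul_eq_zero (hφ : ∀ n, Continuous (φ n))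
    (horth : ∀ i j, i ≠ j → ∫ t in a..b, φ i t ⬝ᵥ φ j t = 0)
    (hν : ∀ n, 0 < ∫ t in a..b, φ n t ⬝ᵥ φ n t)
    (hc : ∀ n, 0 < 1 + c n * ∫ t in a..b, φ n t ⬝ᵥ φ n t)
    (hax : a ≤ x) (hxb : x ≤ b) (hδ : ContinuousOn δ (Icc a x))
    (hF : TendstoUniformlyOn (fun s p => kernelPartialSum φ c s p.1 p.2) (fun p => F p.1 p.2)
      atTop (Icc a x ×ˢ Icc a x))
    (heq : ∀ y ∈ Icc a x, δ y + ∫ t in a..x, δ t ᵥ* F t y = 0) :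
    ∀ y ∈ Icc a x, δ y = 0 := by
  have hcoeff : ∀ n, ∫ t in a..x, δ t ⬝ᵥ φ n t = 0 := by
    intro n
    have hfactor : ∀ k, (∫ t in a..x, δ t ⬝ᵥ φ k t) ^ 2 / (∫ t in a..b, φ k t ⬝ᵥ φ k t)
        + c k * (∫ t in a..x, δ t ⬝ᵥ φ k t) ^ 2 = (∫ t in a..x, δ t ⬝ᵥ φ k t) ^ 2
          * ((1 + c k * ∫ t in a..b, φ k t ⬝ᵥ φ k t) / ∫ t in a..b, φ k t ⬝ᵥ φ k t) := fun k => by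
      field_simp [(hν k).ne']
    have h := add_eq_zero_of_sum_le_of_hasSum_neg
      (sum_sq_integral_dotProduct_div_le hφ horth hax hxb hδ)
      (hasSum_mul_coeff_sq hφ hax hδ hF heq)
      (fun k => (hfactor k).symm ▸ mul_nonneg (sq_nonneg _) (div_pos (hc k) (hν k)).le) n
    rw [hfactor] at h
    exact pow_eq_zero_iff two_ne_zero |>.1
      ((mul_eq_zero.1 h).resolve_right (div_pos (hc n) (hν n)).ne')
  intro y hy
  have hlim := (tendstoUniformlyOn_sum_coeff_smul_neg hφ hax hδ hF heq).tendsto_at hy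
  simp only [hcoeff, mul_zero, zero_smul, Finset.sum_const_zero] at hlim
  exact neg_eq_zero.1 (tendsto_nhds_unique hlim tendsto_const_nhds)

theorem integral_dotProduct_self_pos {g : ℝ → m → ℝ} (hab : a < b) (hg : ContinuousOn g (Icc a b))
    (hne : ∃ t ∈ Icc a b, g t ≠ 0) : 0 < ∫ t in a..b, g t ⬝ᵥ g t := by
  refine intervalIntegral.integral_pos hab (hg.dotProduct hg)
    (fun t _ => dotProduct_self_nonneg _) ?_
  obtain ⟨t, ht, hgt⟩ := hne
  exact ⟨t, ht, (dotProduct_self_nonneg _).lt_of_ne (Ne.symm (dotProduct_self_eq_zero.not.2 hgt))⟩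

theorem row_add_integral_vecMul_eq_zero {Δ K : ℝ → Matrix m m ℝ} (hax : a ≤ x)
    (hΔ : ContinuousOn Δ (Icc a x)) (hK : ContinuousOn K (Icc a x)) {y : ℝ}
    (h : Δ y + ∫ t in a..x, Δ t * K t = 0) (i : m) :
    Δ y i + ∫ t in a..x, Δ t i ᵥ* K t = 0 := by
  have hrow := intervalIntegral.eval_integral (f := fun t => Δ t * K t)
    ((hΔ.mul hK).intervalIntegrable_of_Icc hax) i
  change Δ y i + ∫ t in a..x, (Δ t * K t) i = 0
  rw [← hrow]
  exact congrFun h i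

theorem homogeneous_integral_equation_trivial
    (N : ℕ)
    -- `(φ n)` is an L²-orthogonal, complete system of eigenfunctions with eigenvalues `ev n`
    (φ : ℕ → ℝ → (Fin N → ℝ)) (c : ℕ → ℝ)
    (hφC : ∀ n, ContDiff ℝ 2 (φ n))
    (hφne : ∀ n, ∃ x ∈ Set.Icc (0:ℝ) Real.pi, φ n x ≠ 0)
    (horth : ∀ m n : ℕ, m ≠ n → ∫ x in (0:ℝ)..Real.pi, φ m x ⬝ᵥ φ n x = 0)
    (hc : ∀ n, 0 < 1 + c n * ∫ x in (0:ℝ)..Real.pi, φ n x ⬝ᵥ φ n x)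
    -- `F(x,y) = ∑ n, c n • φ n x ⬝ (φ n y)ᵀ`, converging uniformly, with `F` of class C²
    (F : ℝ → ℝ → Matrix (Fin N) (Fin N) ℝ)
    (hFunif : TendstoUniformlyOn
      (fun (s : Finset ℕ) (p : ℝ × ℝ) => ∑ n ∈ s, c n • Matrix.vecMulVec (φ n p.1) (φ n p.2))
      (fun p => F p.1 p.2) Filter.atTop (Set.Icc 0 Real.pi ×ˢ Set.Icc 0 Real.pi))
    (x : ℝ) (hx : x ∈ Set.Ioc (0:ℝ) Real.pi)
    (Δ : ℝ → Matrix (Fin N) (Fin N) ℝ) (hΔC : ContinuousOn Δ (Set.Icc 0 x))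
    (hΔ : ∀ y ∈ Set.Icc (0:ℝ) x, Δ y + (∫ t in (0:ℝ)..x, Δ t * F t y) = 0) :
    ∀ y ∈ Set.Icc (0:ℝ) x, Δ y = 0 := by
  have hφ : ∀ n, Continuous (φ n) := fun n => (hφC n).continuous
  have hF : TendstoUniformlyOn (fun s p => kernelPartialSum φ c s p.1 p.2) (fun p => F p.1 p.2)
      atTop (Icc 0 x ×ˢ Icc 0 x) :=
    hFunif.mono (prod_mono (Icc_subset_Icc_right hx.2) (Icc_subset_Icc_right hx.2))
  have hFc := continuousOn_of_tendstoUniformlyOn_kernelPartialSum hφ hF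
  intro y hy
  funext i
  exact eq_zero_of_add_integral_vecMul_eq_zero hφ horth
    (fun n => integral_dotProduct_self_pos Real.pi_pos (hφ n).continuousOn (hφne n)) hc hx.1.le
    hx.2 ((continuous_apply i).comp_continuousOn hΔC) hF
    (fun y hy => row_add_integral_vecMul_eq_zero hx.1.le hΔC (hFc.uncurry_right y hy) (hΔ y hy) i)
    y hy
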